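/- arXiv:2207.00353 — 8 statements merged into one kernel-verified Lean document; each statement's English description precedes it below -/
import Mathlib

section
/- Let G be a connected graph with n ≥ 5 vertices and m edges in which every vertex degree lies in {1,2,3,4}, let f : ℕ → ℝ, and set ξ_1 = f(2) - (2/3)f(1) - (1/3)f(4), ξ_2 = f(3) - (1/3)f(1) - (2/3)f(4). If ξ_1 < 0, ξ_2 < 0 and 2ξ_2 < ξ_1 < ξ_2/2, then ∑_v f(d_v) ≤ (1/3)(4f(1)-f(4))n + (2/3)(f(4)-f(1))m + c, where c = ξ_1 if 2m - n ≡ 1 (mod 3), c = ξ_2 if 2m - n ≡ 2 (mod 3), and c = 0 if 2m - n ≡ 0 (mod 3). -/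
open Finset

theorem stmt_7 (V : Type*) [Fintype V] [DecidableEq V] (G : SimpleGraph V)
    [DecidableRel G.Adj] (f : ℕ → ℝ)
    (hn : 5 ≤ Fintype.card V) (hconn : G.Connected)
    (hdeg : ∀ v : V, 1 ≤ G.degree v ∧ G.degree v ≤ 4)
    (ξ₁ ξ₂ : ℝ)
    (hξ₁ : ξ₁ = f 2 - (2/3) * f 1 - (1/3) * f 4)
    (hξ₂ : ξ₂ = f 3 - (1/3) * f 1 - (2/3) * f 4)
    (h1 : ξ₁ < 0) (h2 : ξ₂ < 0) (h3 : 2 * ξ₂ < ξ₁) (h4 : ξ₁ < ξ₂ / 2) :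
    ∑ v, f (G.degree v) ≤
      (1/3) * (4 * f 1 - f 4) * (Fintype.card V : ℝ)
      + (2/3) * (f 4 - f 1) * (G.edgeFinset.card : ℝ)
      + (if (2 * (G.edgeFinset.card : ℤ) - (Fintype.card V : ℤ)) % 3 = 1 then ξ₁
         else if (2 * (G.edgeFinset.card : ℤ) - (Fintype.card V : ℤ)) % 3 = 2 then ξ₂
         else 0) := by
  classical
  set n := Fintype.card V with hn'
  set m := G.edgeFinset.card with hm'
  set N : ℕ → ℕ := fun i => (univ.filter (fun v => G.degree v = i)).card with hN
  clear_value n m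
  have hmap : ∀ v : V, v ∈ (univ : Finset V) → G.degree v ∈ ({1,2,3,4} : Finset ℕ) := by
    intro v _
    have := hdeg v
    simp only [mem_insert, mem_singleton]
    omega
  have hfib : ∀ (M : Type) (_ : AddCommMonoid M) (_ : Module ℕ M) (g : ℕ → M),
      ∑ v, g (G.degree v) = ∑ i ∈ ({1,2,3,4} : Finset ℕ), (N i) • g i := by
    intro M _ _ g
    rw [← Finset.sum_fiberwise_of_maps_to hmap (fun v => g (G.degree v))]
    refine Finset.sum_congr rfl ?_
    intro i _
    rw [Finset.sum_congr rfl (g := fun _ => g i) (fun v hv => by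
      simp only [Finset.mem_filter] at hv
      rw [hv.2]), Finset.sum_const]
  have hf : ∑ v, f (G.degree v)
      = (N 1 : ℝ) * f 1 + (N 2 : ℝ) * f 2 + (N 3 : ℝ) * f 3 + (N 4 : ℝ) * f 4 := by
    rw [hfib ℝ inferInstance inferInstance f]
    norm_num [Finset.sum_insert, Finset.mem_insert, nsmul_eq_mul]
    ring
  have hcardN : n = N 1 + N 2 + N 3 + N 4 := by
    have := hfib ℕ inferInstance inferInstance (fun _ => 1)
    simp only [Finset.sum_const, Finset.card_univ, smul_eq_mul, mul_one] at this
    rw [hn']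
    rw [this]
    norm_num [Finset.sum_insert, Finset.mem_insert]
    ring
  have hmN : 2 * m = N 1 + 2 * N 2 + 3 * N 3 + 4 * N 4 := by
    have h2m := G.sum_degrees_eq_twice_card_edges
    have := hfib ℕ inferInstance inferInstance id
    simp only [id] at this
    rw [h2m] at this
    rw [hm', this]
    norm_num [Finset.sum_insert, Finset.mem_insert]
    ring
  have hNdef := hN
  clear_value N
  have hcardR : (n : ℝ) = (N 1 : ℝ) + N 2 + N 3 + N 4 := by exact_mod_cast congrArg (Nat.cast : ℕ → ℝ) hcardN
  have hmR : 2 * (m : ℝ) = (N 1 : ℝ) + 2 * N 2 + 3 * N 3 + 4 * N 4 := by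
    exact_mod_cast congrArg (Nat.cast : ℕ → ℝ) hmN
  have E : ∑ v, f (G.degree v)
      = (1/3) * (4 * f 1 - f 4) * (n : ℝ) + (2/3) * (f 4 - f 1) * (m : ℝ)
        + (N 2 : ℝ) * ξ₁ + (N 3 : ℝ) * ξ₂ := by
    rw [hf]
    linear_combination (-(1/3) * (4 * f 1 - f 4)) * hcardR + (-(1/3) * (f 4 - f 1)) * hmR
      - (N 2 : ℝ) * hξ₁ - (N 3 : ℝ) * hξ₂
  -- integer facts for mod analysis
  have hcardZ : (n : ℤ) = (N 1 : ℤ) + N 2 + N 3 + N 4 := by exact_mod_cast hcardN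
  have hmZ : 2 * (m : ℤ) = (N 1 : ℤ) + 2 * N 2 + 3 * N 3 + 4 * N 4 := by exact_mod_cast hmN
  have hN2 : (0:ℝ) ≤ (N 2 : ℝ) := Nat.cast_nonneg _
  have hN3 : (0:ℝ) ≤ (N 3 : ℝ) := Nat.cast_nonneg _
  clear hfib hmap hf hcardN hmN hcardR hmR hNdef hn hconn hdeg
  rw [E]
  have key : ∀ c : ℝ, (N 2 : ℝ) * ξ₁ + (N 3 : ℝ) * ξ₂ ≤ c →
      (1/3) * (4 * f 1 - f 4) * (n : ℝ) + (2/3) * (f 4 - f 1) * (m : ℝ)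
        + (N 2 : ℝ) * ξ₁ + (N 3 : ℝ) * ξ₂
      ≤ (1/3) * (4 * f 1 - f 4) * (n : ℝ) + (2/3) * (f 4 - f 1) * (m : ℝ) + c := by
    intro c hc; linarith
  have hm2 : (N 2 : ℝ) * ξ₁ ≤ 0 := mul_nonpos_of_nonneg_of_nonpos hN2 h1.le
  have hm3 : (N 3 : ℝ) * ξ₂ ≤ 0 := mul_nonpos_of_nonneg_of_nonpos hN3 h2.le
  split_ifs with hA hB
  · -- residue 1
    apply key
    by_cases h21 : 1 ≤ N 2
    · have hc : (1:ℝ) ≤ (N 2 : ℝ) := by exact_mod_cast h21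
      have : (N 2 : ℝ) * ξ₁ ≤ 1 * ξ₁ := mul_le_mul_of_nonpos_right hc h1.le
      linarith
    · have h20 : N 2 = 0 := by omega
      have h32 : 2 ≤ N 3 := by
        have hz2 : (N 2 : ℤ) = 0 := by exact_mod_cast h20
        omega
      have hc : (2:ℝ) ≤ (N 3 : ℝ) := by exact_mod_cast h32
      have hz2 : (N 2 : ℝ) = 0 := by exact_mod_cast h20
      have : (N 3 : ℝ) * ξ₂ ≤ 2 * ξ₂ := mul_le_mul_of_nonpos_right hc h2.le
      rw [hz2]
      linarith
  · -- residue 2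
    apply key
    by_cases h31 : 1 ≤ N 3
    · have hc : (1:ℝ) ≤ (N 3 : ℝ) := by exact_mod_cast h31
      have : (N 3 : ℝ) * ξ₂ ≤ 1 * ξ₂ := mul_le_mul_of_nonpos_right hc h2.le
      linarith
    · have h30 : N 3 = 0 := by omega
      have h22 : 2 ≤ N 2 := by
        have hz3 : (N 3 : ℤ) = 0 := by exact_mod_cast h30
        omega
      have hc : (2:ℝ) ≤ (N 2 : ℝ) := by exact_mod_cast h22
      have hz3 : (N 3 : ℝ) = 0 := by exact_mod_cast h30
      have : (N 2 : ℝ) * ξ₁ ≤ 2 * ξ₁ := mul_le_mul_of_nonpos_right hc h1.le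
      rw [hz3]
      linarith
  · -- residue 0
    apply key
    linarith
end

section
/- Let G be a connected graph with n ≥ 5 vertices and m edges in which every vertex degree lies in {1,2,3,4}, let f : ℕ → ℝ, and set ξ_1 = f(2) - (2/3)f(1) - (1/3)f(4), ξ_2 = f(3) - (1/3)f(1) - (2/3)f(4). If ξ_1 > 0, ξ_2 > 0 and ξ_2/2 < ξ_1 < 2ξ_2, then ∑_v f(d_v) ≥ (1/3)(4f(1)-f(4))n + (2/3)(f(4)-f(1))m + c, where c = ξ_1 if 2m - n ≡ 1 (mod 3), c = ξ_2 if 2m - n ≡ 2 (mod 3), and c = 0 if 2m - n ≡ 0 (mod 3). -/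
open Finset

theorem stmt_8 (V : Type*) [Fintype V] [DecidableEq V] (G : SimpleGraph V)
    [DecidableRel G.Adj] (f : ℕ → ℝ)
    (hn : 5 ≤ Fintype.card V) (hconn : G.Connected)
    (hdeg : ∀ v : V, 1 ≤ G.degree v ∧ G.degree v ≤ 4)
    (ξ₁ ξ₂ : ℝ)
    (hξ₁ : ξ₁ = f 2 - (2/3) * f 1 - (1/3) * f 4)
    (hξ₂ : ξ₂ = f 3 - (1/3) * f 1 - (2/3) * f 4)
    (h1 : 0 < ξ₁) (h2 : 0 < ξ₂) (h3 : ξ₂ / 2 < ξ₁) (h4 : ξ₁ < 2 * ξ₂) :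
    ∑ v, f (G.degree v) ≥
      (1/3) * (4 * f 1 - f 4) * (Fintype.card V : ℝ)
      + (2/3) * (f 4 - f 1) * (G.edgeFinset.card : ℝ)
      + (if (2 * (G.edgeFinset.card : ℤ) - (Fintype.card V : ℤ)) % 3 = 1 then ξ₁
         else if (2 * (G.edgeFinset.card : ℤ) - (Fintype.card V : ℤ)) % 3 = 2 then ξ₂
         else 0) := by
  classical
  set n := Fintype.card V with hnn
  set m := G.edgeFinset.card with hmm
  set A : ℝ := (1/3) * (4 * f 1 - f 4) with hA
  set B : ℝ := (2/3) * (f 4 - f 1) with hB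
  set a := (univ.filter (fun v => G.degree v = 1)).card with ha
  set b := (univ.filter (fun v => G.degree v = 2)).card with hb
  set c := (univ.filter (fun v => G.degree v = 3)).card with hc
  set d := (univ.filter (fun v => G.degree v = 4)).card with hd
  -- indicator sum lemma
  have ind : ∀ (p : V → Prop) [DecidablePred p] (ξ : ℝ),
      ∑ v, (if p v then ξ else 0) = ((univ.filter p).card : ℝ) * ξ := by
    intro p _ ξ
    rw [Finset.sum_ite, Finset.sum_const, Finset.sum_const_zero, add_zero, nsmul_eq_mul]
  have indZ : ∀ (p : V → Prop) [DecidablePred p] (ξ : ℤ),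
      ∑ v, (if p v then ξ else 0) = ((univ.filter p).card : ℤ) * ξ := by
    intro p _ ξ
    rw [Finset.sum_ite, Finset.sum_const, Finset.sum_const_zero, add_zero, nsmul_eq_mul]
  -- per-vertex decomposition
  have key : ∀ v : V, f (G.degree v) = A + (B/2) * (G.degree v : ℝ)
      + (if G.degree v = 2 then ξ₁ else 0) + (if G.degree v = 3 then ξ₂ else 0) := by
    intro v
    obtain ⟨hl, hr⟩ := hdeg v
    interval_cases (G.degree v) <;> simp [hA, hB, hξ₁, hξ₂] <;> ring
  have hsum : ∑ v, f (G.degree v)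
      = A * n + (B/2) * (∑ v, (G.degree v : ℝ)) + (b : ℝ) * ξ₁ + (c : ℝ) * ξ₂ := by
    calc ∑ v, f (G.degree v)
        = ∑ v, (A + (B/2) * (G.degree v : ℝ)
          + (if G.degree v = 2 then ξ₁ else 0) + (if G.degree v = 3 then ξ₂ else 0)) := by
          exact Finset.sum_congr rfl fun v _ => key v
      _ = A * n + (B/2) * (∑ v, (G.degree v : ℝ)) + (b : ℝ) * ξ₁ + (c : ℝ) * ξ₂ := by
          rw [Finset.sum_add_distrib, Finset.sum_add_distrib, Finset.sum_add_distrib,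
            Finset.sum_const, ← Finset.mul_sum, ind _ ξ₁, ind _ ξ₂, nsmul_eq_mul,
            Finset.card_univ]
          ring
  have hdegsum : ∑ v, (G.degree v : ℝ) = 2 * (m : ℝ) := by
    exact_mod_cast congrArg (fun k : ℕ => (k : ℝ)) G.sum_degrees_eq_twice_card_edges
  -- count identities over ℤ
  have hnid : (n : ℤ) = a + b + c + d := by
    have key2 : ∀ v : V, (1 : ℤ) = (if G.degree v = 1 then 1 else 0)
        + (if G.degree v = 2 then 1 else 0) + (if G.degree v = 3 then 1 else 0)
        + (if G.degree v = 4 then 1 else 0) := by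
      intro v
      obtain ⟨hl, hr⟩ := hdeg v
      interval_cases (G.degree v) <;> simp
    have h0 : (n : ℤ) = ∑ _v : V, (1 : ℤ) := by simp [hnn]
    rw [h0]
    calc ∑ v : V, (1 : ℤ) = ∑ v : V, ((if G.degree v = 1 then (1:ℤ) else 0)
            + (if G.degree v = 2 then 1 else 0) + (if G.degree v = 3 then 1 else 0)
            + (if G.degree v = 4 then 1 else 0)) :=
            Finset.sum_congr rfl fun v _ => key2 v
        _ = (a : ℤ) + b + c + d := by
            rw [Finset.sum_add_distrib, Finset.sum_add_distrib, Finset.sum_add_distrib,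
              indZ, indZ, indZ, indZ]
            ring
  have hmid : 2 * (m : ℤ) = a + 2 * b + 3 * c + 4 * d := by
    have key3 : ∀ v : V, (G.degree v : ℤ) = (if G.degree v = 1 then 1 else 0)
        + (if G.degree v = 2 then 2 else 0) + (if G.degree v = 3 then 3 else 0)
        + (if G.degree v = 4 then 4 else 0) := by
      intro v
      obtain ⟨hl, hr⟩ := hdeg v
      interval_cases (G.degree v) <;> simp
    have hds : ∑ v, (G.degree v : ℤ) = 2 * (m : ℤ) := by
      exact_mod_cast congrArg (fun k : ℕ => (k : ℤ)) G.sum_degrees_eq_twice_card_edges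
    calc 2 * (m : ℤ) = ∑ v, (G.degree v : ℤ) := hds.symm
      _ = ∑ v : V, ((if G.degree v = 1 then (1:ℤ) else 0)
            + (if G.degree v = 2 then 2 else 0) + (if G.degree v = 3 then 3 else 0)
            + (if G.degree v = 4 then 4 else 0)) :=
            Finset.sum_congr rfl fun v _ => key3 v
      _ = (a : ℤ) + 2 * b + 3 * c + 4 * d := by
            rw [Finset.sum_add_distrib, Finset.sum_add_distrib, Finset.sum_add_distrib,
              indZ, indZ, indZ, indZ]
            ring
  have hmod : (2 * (m : ℤ) - (n : ℤ)) = (b : ℤ) + 2 * c + 3 * d := by omega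
  -- the key lower bound on b ξ₁ + c ξ₂
  have hbound : (b : ℝ) * ξ₁ + (c : ℝ) * ξ₂ ≥
      (if (2 * (m : ℤ) - (n : ℤ)) % 3 = 1 then ξ₁
       else if (2 * (m : ℤ) - (n : ℤ)) % 3 = 2 then ξ₂ else 0) := by
    have hb0 : (0:ℝ) ≤ (b : ℝ) := Nat.cast_nonneg b
    have hc0 : (0:ℝ) ≤ (c : ℝ) := Nat.cast_nonneg c
    split_ifs with hcase1 hcase2
    · have : 1 ≤ b ∨ 2 ≤ c := by omega
      rcases this with hbb | hcc
      · have : (1:ℝ) ≤ (b:ℝ) := by exact_mod_cast hbb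
        nlinarith
      · have : (2:ℝ) ≤ (c:ℝ) := by exact_mod_cast hcc
        nlinarith
    · have : 1 ≤ c ∨ 2 ≤ b := by omega
      rcases this with hcc | hbb
      · have : (1:ℝ) ≤ (c:ℝ) := by exact_mod_cast hcc
        nlinarith
      · have : (2:ℝ) ≤ (b:ℝ) := by exact_mod_cast hbb
        nlinarith
    · exact add_nonneg (mul_nonneg hb0 h1.le) (mul_nonneg hc0 h2.le)
  rw [hsum, hdegsum]
  have : (B/2) * (2 * (m : ℝ)) = B * m := by ring
  rw [this]
  linarith [hbound]
end

section
/- For every real number α with 0 < α < 1, the quantities ξ_1 = -(2^α - 2)(2^α - 1)/3 and ξ_2 = (3^{α+1} - 2^{2α+1} - 1)/3 satisfy ξ_1 > 0, ξ_2 > 0 and ξ_2/2 < ξ_1 < 2ξ_2. -/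
theorem stmt_11 (α : ℝ) (h0 : 0 < α) (h1 : α < 1) :
    let ξ₁ : ℝ := -((2:ℝ)^α - 2) * ((2:ℝ)^α - 1) / 3
    let ξ₂ : ℝ := ((3:ℝ)^(α+1) - (2:ℝ)^(2*α+1) - 1) / 3
    0 < ξ₁ ∧ 0 < ξ₂ ∧ ξ₂ / 2 < ξ₁ ∧ ξ₁ < 2 * ξ₂ := by
  intro ξ₁ ξ₂
  have hsc := Real.strictConcaveOn_rpow h0 h1
  have key : ∀ a b x y : ℝ, 0 ≤ x → 0 ≤ y → x ≠ y → 0 < a → 0 < b → a + b = 1 →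
      a * x^α + b * y^α < (a*x+b*y)^α := by
    intro a b x y hx hy hxy ha hb hab
    simpa [smul_eq_mul] using hsc.2 hx hy hxy ha hb hab
  have A := key (2/3) (1/3) 1 4 (by norm_num) (by norm_num) (by norm_num)
    (by norm_num) (by norm_num) (by norm_num)
  have B := key (1/3) (2/3) 1 4 (by norm_num) (by norm_num) (by norm_num)
    (by norm_num) (by norm_num) (by norm_num)
  have C := key (1/2) (1/2) 1 3 (by norm_num) (by norm_num) (by norm_num)
    (by norm_num) (by norm_num) (by norm_num)
  have D := key (1/2) (1/2) 2 4 (by norm_num) (by norm_num) (by norm_num)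
    (by norm_num) (by norm_num) (by norm_num)
  norm_num at A B C D
  have h4 : (4:ℝ)^α = ((2:ℝ)^α)^2 := by
    rw [show (4:ℝ) = 2^(2:ℕ) by norm_num, ← Real.rpow_natCast 2 2,
      ← Real.rpow_mul (by norm_num), mul_comm, Real.rpow_mul (by norm_num),
      Real.rpow_natCast]
  have h3 : (3:ℝ)^(α+1) = (3:ℝ)^α * 3 := by
    rw [Real.rpow_add (by norm_num), Real.rpow_one]
  have h2 : (2:ℝ)^(2*α+1) = ((2:ℝ)^α)^2 * 2 := by
    rw [Real.rpow_add (by norm_num), Real.rpow_one, ← Real.rpow_natCast ((2:ℝ)^α) 2,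
      ← Real.rpow_mul (by norm_num)]
    ring_nf
  simp only [ξ₁, ξ₂, h3, h2]
  rw [h4] at A B D
  refine ⟨by nlinarith, by nlinarith, by nlinarith, by nlinarith⟩
end

section
/- Let G be a connected graph with n ≥ 5 vertices and m edges, all degrees in {1,2,3,4}, and let α > 1 or α < 0. Then ∑_v d_v^α ≤ ((4-4^α)/3)n + (2(4^α-1)/3)m + c, where c = -(2^α-2)(2^α-1)/3 if 2m-n ≡ 1 (mod 3), c = (3^{α+1} - 2^{2α+1} - 1)/3 if 2m-n ≡ 2 (mod 3), and c = 0 if 2m-n ≡ 0 (mod 3). -/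
open Finset

lemma chord_aux {α : ℝ} (hα : 1 < α ∨ α < 0) {a b l mw : ℝ} (ha : 0 < a) (hb : 0 < b)
    (hl : 0 ≤ l) (hm : 0 ≤ mw) (hlm : l + mw = 1) :
    (l * a + mw * b) ^ α ≤ l * a ^ α + mw * b ^ α := by
  rcases hα with h1 | h1
  · have := (convexOn_rpow h1.le).2 (Set.mem_Ici.2 ha.le) (Set.mem_Ici.2 hb.le) hl hm hlm
    simpa using this
  · have hgm : a ^ l * b ^ mw ≤ l * a + mw * b :=
      Real.geom_mean_le_arith_mean2_weighted hl hm ha.le hb.le hlm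
    have hx : 0 < a ^ l * b ^ mw := by positivity
    have h1' : (l * a + mw * b) ^ α ≤ (a ^ l * b ^ mw) ^ α :=
      Real.rpow_le_rpow_of_nonpos hx hgm h1.le
    have h2' : (a ^ l * b ^ mw) ^ α = (a ^ α) ^ l * (b ^ α) ^ mw := by
      rw [Real.mul_rpow (by positivity) (by positivity),
        ← Real.rpow_mul ha.le, ← Real.rpow_mul hb.le, mul_comm l α, mul_comm mw α,
        Real.rpow_mul ha.le, Real.rpow_mul hb.le]
    have h3' : (a ^ α) ^ l * (b ^ α) ^ mw ≤ l * a ^ α + mw * b ^ α :=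
      Real.geom_mean_le_arith_mean2_weighted hl hm
        (Real.rpow_pos_of_pos ha α).le (Real.rpow_pos_of_pos hb α).le hlm
    calc (l * a + mw * b) ^ α ≤ (a ^ l * b ^ mw) ^ α := h1'
      _ = (a ^ α) ^ l * (b ^ α) ^ mw := h2'
      _ ≤ l * a ^ α + mw * b ^ α := h3'

theorem stmt_12 (V : Type*) [Fintype V] [DecidableEq V] (G : SimpleGraph V)
    [DecidableRel G.Adj] (α : ℝ) (hα : 1 < α ∨ α < 0)
    (hn : 5 ≤ Fintype.card V) (hconn : G.Connected)
    (hdeg : ∀ v : V, 1 ≤ G.degree v ∧ G.degree v ≤ 4) :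
    ∑ v, (G.degree v : ℝ) ^ α ≤
      ((4 - (4:ℝ)^α) / 3) * (Fintype.card V : ℝ)
      + (2 * ((4:ℝ)^α - 1) / 3) * (G.edgeFinset.card : ℝ)
      + (if (2 * (G.edgeFinset.card : ℤ) - (Fintype.card V : ℤ)) % 3 = 1 then
           -((2:ℝ)^α - 2) * ((2:ℝ)^α - 1) / 3
         else if (2 * (G.edgeFinset.card : ℤ) - (Fintype.card V : ℤ)) % 3 = 2 then
           ((3:ℝ)^(α+1) - (2:ℝ)^(2*α+1) - 1) / 3
         else 0) := by
  classical
  have h4 : (4:ℝ)^α = 2^α * 2^α := by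
    rw [show (4:ℝ) = 2 * 2 by norm_num, Real.mul_rpow (by norm_num) (by norm_num)]
  -- basic rpow positivity / comparisons
  have t2pos : (0:ℝ) < (2:ℝ)^α := Real.rpow_pos_of_pos (by norm_num) α
  have t3pos : (0:ℝ) < (3:ℝ)^α := Real.rpow_pos_of_pos (by norm_num) α
  -- S2, S3 : slack values
  set S2 : ℝ := ((4:ℝ)^α - 3 * (2:ℝ)^α + 2) / 3 with hS2
  set S3 : ℝ := (2 * (4:ℝ)^α - 3 * (3:ℝ)^α + 1) / 3 with hS3
  have hS2nn : 0 ≤ S2 := by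
    rcases hα with h1 | h1
    · have : (2:ℝ)^(1:ℝ) < (2:ℝ)^α :=
        Real.rpow_lt_rpow_of_exponent_lt (by norm_num) h1
      rw [Real.rpow_one] at this
      rw [hS2, h4]; nlinarith
    · have : (2:ℝ)^α < (2:ℝ)^(0:ℝ) :=
        Real.rpow_lt_rpow_of_exponent_lt (by norm_num) h1
      rw [Real.rpow_zero] at this
      rw [hS2, h4]; nlinarith
  have hS3nn : 0 ≤ S3 := by
    have := chord_aux hα (a := 1) (b := 4) (l := 1/3) (mw := 2/3)
      (by norm_num) (by norm_num) (by norm_num) (by norm_num) (by norm_num)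
    rw [show (1/3 : ℝ) * 1 + 2/3 * 4 = 3 by norm_num, Real.one_rpow] at this
    rw [hS3]; linarith
  have hI3 : S2 ≤ 2 * S3 := by
    have := chord_aux hα (a := 2) (b := 4) (l := 1/2) (mw := 1/2)
      (by norm_num) (by norm_num) (by norm_num) (by norm_num) (by norm_num)
    rw [show (1/2 : ℝ) * 2 + 1/2 * 4 = 3 by norm_num] at this
    rw [hS2, hS3]; linarith
  have hI4 : S3 ≤ 2 * S2 := by
    have := chord_aux hα (a := 1) (b := 3) (l := 1/2) (mw := 1/2)
      (by norm_num) (by norm_num) (by norm_num) (by norm_num) (by norm_num)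
    rw [show (1/2 : ℝ) * 1 + 1/2 * 3 = 2 by norm_num, Real.one_rpow] at this
    rw [hS2, hS3, h4]; nlinarith
  -- counts
  set n := Fintype.card V with hndef
  set m := G.edgeFinset.card with hmdef
  set n2 := (univ.filter (fun v => G.degree v = 2)).card with hn2
  set n3 := (univ.filter (fun v => G.degree v = 3)).card with hn3
  set n4 := (univ.filter (fun v => G.degree v = 4)).card with hn4
  have key : 2 * m = n + (n2 + 2 * n3 + 3 * n4) := by
    have h1 : ∑ v : V, G.degree v = 2 * m := G.sum_degrees_eq_twice_card_edges
    have h2 : ∑ v : V, G.degree v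
        = ∑ v : V, (1 + ((if G.degree v = 2 then 1 else 0)
            + 2 * (if G.degree v = 3 then 1 else 0)
            + 3 * (if G.degree v = 4 then 1 else 0))) := by
      refine Finset.sum_congr rfl fun v _ => ?_
      have := hdeg v
      rcases (by omega : G.degree v = 1 ∨ G.degree v = 2 ∨ G.degree v = 3 ∨ G.degree v = 4)
        with h | h | h | h <;> rw [h] <;> norm_num
    rw [h2] at h1
    rw [Finset.sum_add_distrib, Finset.sum_add_distrib, Finset.sum_add_distrib,
      Finset.sum_const, smul_eq_mul, mul_one, ← Finset.mul_sum, ← Finset.mul_sum,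
      ← Finset.card_filter, ← Finset.card_filter, ← Finset.card_filter,
      card_univ, ← hndef, ← hn2, ← hn3, ← hn4] at h1
    omega
  -- the main sum identity
  have HS : (∑ v, (G.degree v : ℝ)) = 2 * (m : ℝ) := by
    rw [← Nat.cast_sum, G.sum_degrees_eq_twice_card_edges]
    push_cast [hmdef]
    ring
  have hsum : ∑ v, (G.degree v : ℝ) ^ α
      = ((4 - (4:ℝ)^α) / 3) * n + (2 * ((4:ℝ)^α - 1) / 3) * m - (S2 * n2 + S3 * n3) := by
    have e : ∀ v ∈ (univ : Finset V), (G.degree v : ℝ) ^ α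
        = ((4 - (4:ℝ)^α) / 3 + (((4:ℝ)^α - 1) / 3) * (G.degree v : ℝ))
          - ((if G.degree v = 2 then S2 else 0) + (if G.degree v = 3 then S3 else 0)) := by
      intro v _
      have := hdeg v
      rcases (by omega : G.degree v = 1 ∨ G.degree v = 2 ∨ G.degree v = 3 ∨ G.degree v = 4)
        with h | h | h | h
      · rw [h]; push_cast; norm_num [Real.one_rpow]; ring
      · rw [h]; push_cast; norm_num [hS2, hS3]; ring
      · rw [h]; push_cast; norm_num [hS2, hS3]; ring
      · rw [h]; push_cast; norm_num; ring
    rw [Finset.sum_congr rfl e, Finset.sum_sub_distrib, Finset.sum_add_distrib,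
      Finset.sum_add_distrib, Finset.sum_const, ← Finset.mul_sum, HS,
      ← Finset.sum_filter, ← Finset.sum_filter, Finset.sum_const, Finset.sum_const,
      ← hn2, ← hn3]
    simp only [smul_eq_mul, nsmul_eq_mul, card_univ, ← hndef]
    ring
  rw [hsum]
  -- correction constant identities
  have hc1 : -((2:ℝ)^α - 2) * ((2:ℝ)^α - 1) / 3 = -S2 := by
    rw [hS2, h4]; ring
  have hc2 : ((3:ℝ)^(α+1) - (2:ℝ)^(2*α+1) - 1) / 3 = -S3 := by
    have e3 : (3:ℝ)^(α+1) = 3 * (3:ℝ)^α := by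
      rw [Real.rpow_add (by norm_num), Real.rpow_one]; ring
    have e2 : (2:ℝ)^(2*α+1) = 2 * ((2:ℝ)^α * (2:ℝ)^α) := by
      rw [Real.rpow_add (by norm_num), Real.rpow_one, two_mul,
        Real.rpow_add (by norm_num)]
      ring
    rw [e3, e2, hS3, h4]; ring
  have keyZ : 2 * (m : ℤ) - (n : ℤ) = (n2 : ℤ) + 2 * n3 + 3 * n4 := by
    have := key; push_cast; omega
  split_ifs with hmod1 hmod2
  · -- 2m - n ≡ 1 [MOD 3]
    rw [hc1]
    rw [keyZ] at hmod1
    have hcase : 1 ≤ n2 ∨ 2 ≤ n3 := by omega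
    rcases hcase with h | h
    · have h' : (1:ℝ) ≤ (n2:ℝ) := by exact_mod_cast h
      have hb1 : S2 * 1 ≤ S2 * (n2:ℝ) := mul_le_mul_of_nonneg_left h' hS2nn
      have hb2 : 0 ≤ S3 * (n3:ℝ) := mul_nonneg hS3nn (Nat.cast_nonneg _)
      linarith
    · have h' : (2:ℝ) ≤ (n3:ℝ) := by exact_mod_cast h
      have hb1 : S3 * 2 ≤ S3 * (n3:ℝ) := mul_le_mul_of_nonneg_left h' hS3nn
      have hb2 : 0 ≤ S2 * (n2:ℝ) := mul_nonneg hS2nn (Nat.cast_nonneg _)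
      linarith
  · -- 2m - n ≡ 2 [MOD 3]
    rw [hc2]
    rw [keyZ] at hmod2
    have hcase : 1 ≤ n3 ∨ 2 ≤ n2 := by omega
    rcases hcase with h | h
    · have h' : (1:ℝ) ≤ (n3:ℝ) := by exact_mod_cast h
      have hb1 : S3 * 1 ≤ S3 * (n3:ℝ) := mul_le_mul_of_nonneg_left h' hS3nn
      have hb2 : 0 ≤ S2 * (n2:ℝ) := mul_nonneg hS2nn (Nat.cast_nonneg _)
      linarith
    · have h' : (2:ℝ) ≤ (n2:ℝ) := by exact_mod_cast h
      have hb1 : S2 * 2 ≤ S2 * (n2:ℝ) := mul_le_mul_of_nonneg_left h' hS2nn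
      have hb2 : 0 ≤ S3 * (n3:ℝ) := mul_nonneg hS3nn (Nat.cast_nonneg _)
      linarith
  · have hb1 : 0 ≤ S2 * (n2:ℝ) := mul_nonneg hS2nn (Nat.cast_nonneg _)
    have hb2 : 0 ≤ S3 * (n3:ℝ) := mul_nonneg hS3nn (Nat.cast_nonneg _)
    linarith
end

section
/- Let G be a connected graph with n ≥ 5 vertices and m edges, all degrees in {1,2,3,4}, and let a > 1 or 0 < a < 1/3. Then the variable sum exdeg index SEI_a(G) = ∑_v d_v·a^{d_v} satisfies SEI_a(G) ≤ (4a(1-a^3)/3)n + (2a(4a^3-1)/3)m + c, where c = 2a(1-a)(2a^2+2a-1)/3 if 2m-n ≡ 1 (mod 3), c = a(1-a)(8a^2-a-1)/3 if 2m-n ≡ 2 (mod 3), and c = 0 if 2m-n ≡ 0 (mod 3). -/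
open Finset

lemma stmt_15_aux (c1 c2 : ℝ) (n2 n3 : ℕ) (t : ℤ)
    (hc1 : c1 ≤ 0) (hc2 : c2 ≤ 0) (h21 : 2 * c2 ≤ c1) (h12 : 2 * c1 ≤ c2)
    (ht : t = ((n2 : ℤ) + 2 * n3) % 3) :
    (n2 : ℝ) * c1 + (n3 : ℝ) * c2 ≤ if t = 1 then c1 else if t = 2 then c2 else 0 := by
  have hn2nn : (0:ℝ) ≤ (n2 : ℝ) := Nat.cast_nonneg _
  have hn3nn : (0:ℝ) ≤ (n3 : ℝ) := Nat.cast_nonneg _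
  have e2 : (n3 : ℝ) * c2 ≤ 0 := by
    have := mul_le_mul_of_nonneg_left hc2 hn3nn; simpa using this
  have e1 : (n2 : ℝ) * c1 ≤ 0 := by
    have := mul_le_mul_of_nonneg_left hc1 hn2nn; simpa using this
  by_cases hA : t = 1
  · rw [if_pos hA]
    rw [hA] at ht
    have hcases : 1 ≤ n2 ∨ 2 ≤ n3 := by omega
    rcases hcases with h | h
    · have h' : (1:ℝ) ≤ (n2 : ℝ) := by exact_mod_cast h
      have : (n2 : ℝ) * c1 ≤ 1 * c1 := mul_le_mul_of_nonpos_right h' hc1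
      linarith
    · have h' : (2:ℝ) ≤ (n3 : ℝ) := by exact_mod_cast h
      have : (n3 : ℝ) * c2 ≤ 2 * c2 := mul_le_mul_of_nonpos_right h' hc2
      linarith
  · rw [if_neg hA]
    by_cases hB : t = 2
    · rw [if_pos hB]
      rw [hB] at ht
      have hcases : 1 ≤ n3 ∨ 2 ≤ n2 := by omega
      rcases hcases with h | h
      · have h' : (1:ℝ) ≤ (n3 : ℝ) := by exact_mod_cast h
        have : (n3 : ℝ) * c2 ≤ 1 * c2 := mul_le_mul_of_nonpos_right h' hc2
        linarith
      · have h' : (2:ℝ) ≤ (n2 : ℝ) := by exact_mod_cast h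
        have : (n2 : ℝ) * c1 ≤ 2 * c1 := mul_le_mul_of_nonpos_right h' hc1
        linarith
    · rw [if_neg hB]
      linarith

set_option maxHeartbeats 1000000 in
theorem stmt_15 (V : Type*) [Fintype V] [DecidableEq V] (G : SimpleGraph V)
    [DecidableRel G.Adj] (a : ℝ) (ha : 1 < a ∨ (0 < a ∧ a < 1/3))
    (hn : 5 ≤ Fintype.card V) (hconn : G.Connected)
    (hdeg : ∀ v : V, 1 ≤ G.degree v ∧ G.degree v ≤ 4) :
    ∑ v, (G.degree v : ℝ) * a ^ (G.degree v : ℕ) ≤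
      (4 * a * (1 - a^3) / 3) * (Fintype.card V : ℝ)
      + (2 * a * (4*a^3 - 1) / 3) * (G.edgeFinset.card : ℝ)
      + (if (2 * (G.edgeFinset.card : ℤ) - (Fintype.card V : ℤ)) % 3 = 1 then
           2 * a * (1 - a) * (2*a^2 + 2*a - 1) / 3
         else if (2 * (G.edgeFinset.card : ℤ) - (Fintype.card V : ℤ)) % 3 = 2 then
           a * (1 - a) * (8*a^2 - a - 1) / 3
         else 0) := by
  classical
  set c1 : ℝ := 2 * a * (1 - a) * (2*a^2 + 2*a - 1) / 3 with hc1def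
  set c2 : ℝ := a * (1 - a) * (8*a^2 - a - 1) / 3 with hc2def
  set n2 : ℕ := (univ.filter fun v => G.degree v = 2).card with hn2def
  set n3 : ℕ := (univ.filter fun v => G.degree v = 3).card with hn3def
  clear_value c1 c2 n2 n3
  have hc1 : c1 ≤ 0 := by
    rw [hc1def]; rcases ha with h | ⟨h1, h2⟩
    · nlinarith [sq_nonneg a, sq_nonneg (a-1), sq_nonneg (a+1),
        mul_pos (by linarith : (0:ℝ) < a) (by linarith : (0:ℝ) < a - 1)]
    · nlinarith [mul_pos h1 h1, mul_pos (mul_pos h1 h1) h1, sq_nonneg (a-1),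
        mul_pos h1 (by linarith : (0:ℝ) < 1 - 3*a)]
  have hc2 : c2 ≤ 0 := by
    rw [hc2def]; rcases ha with h | ⟨h1, h2⟩
    · nlinarith [mul_pos (by linarith : (0:ℝ) < a) (by linarith : (0:ℝ) < a - 1), sq_nonneg a]
    · nlinarith [mul_pos h1 (by linarith : (0:ℝ) < 1 - 3*a), mul_pos h1 h1,
        mul_pos (mul_pos h1 h1) h1]
  have h21 : 2 * c2 ≤ c1 := by
    rw [hc1def, hc2def]; rcases ha with h | ⟨h1, h2⟩
    · nlinarith [mul_pos (mul_pos (by linarith : (0:ℝ) < a) (by linarith : (0:ℝ) < a))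
        (by linarith : (0:ℝ) < a - 1),
        mul_pos (by linarith : (0:ℝ) < a) (by linarith : (0:ℝ) < a - 1)]
    · nlinarith [mul_pos (mul_pos h1 h1) (by linarith : (0:ℝ) < 1 - 2*a),
        mul_pos (mul_pos (mul_pos h1 h1) h1) (by linarith : (0:ℝ) < 1 - a)]
  have h12 : 2 * c1 ≤ c2 := by
    rw [hc1def, hc2def]; rcases ha with h | ⟨h1, h2⟩
    · nlinarith [mul_pos (by linarith : (0:ℝ) < a)
        (mul_pos (by linarith : (0:ℝ) < a - 1) (by linarith : (0:ℝ) < 3*a - 1))]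
    · nlinarith [mul_pos h1 (mul_pos (by linarith : (0:ℝ) < 1 - a)
        (by linarith : (0:ℝ) < 1 - 3*a))]
  -- pointwise decomposition
  have key : ∀ v : V, (G.degree v : ℝ) * a ^ (G.degree v : ℕ) =
      (4 * a * (1 - a^3) / 3) + (a * (4*a^3 - 1) / 3) * (G.degree v : ℝ)
      + ((if G.degree v = 2 then c1 else 0) + (if G.degree v = 3 then c2 else 0)) := by
    intro v
    obtain ⟨h1, h4⟩ := hdeg v
    set d := G.degree v with hd
    interval_cases d <;> norm_num [hc1def, hc2def] <;> ring
  have hsum : ∑ v, (G.degree v : ℝ) * a ^ (G.degree v : ℕ) =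
      (4 * a * (1 - a^3) / 3) * (Fintype.card V : ℝ)
      + (a * (4*a^3 - 1) / 3) * (∑ v, (G.degree v : ℝ))
      + ((n2 : ℝ) * c1 + (n3 : ℝ) * c2) := by
    rw [Finset.sum_congr rfl fun v _ => key v]
    rw [Finset.sum_add_distrib, Finset.sum_add_distrib, Finset.sum_add_distrib]
    rw [← Finset.sum_filter, ← Finset.sum_filter, Finset.sum_const, Finset.sum_const,
      Finset.sum_const, Finset.mul_sum]
    simp [hn2def, hn3def, mul_comm, Finset.card_univ]
  have hhs : ∑ v, G.degree v = 2 * G.edgeFinset.card := G.sum_degrees_eq_twice_card_edges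
  have hhsR : ∑ v, (G.degree v : ℝ) = 2 * (G.edgeFinset.card : ℝ) := by
    exact_mod_cast congrArg (Nat.cast : ℕ → ℝ) hhs
  -- mod computation
  have hcount : ((n2 : ℤ) + 2 * n3) =
      ∑ v, ((if G.degree v = 2 then (1:ℤ) else 0) + (if G.degree v = 3 then (2:ℤ) else 0)) := by
    rw [Finset.sum_add_distrib, ← Finset.sum_filter, ← Finset.sum_filter,
      Finset.sum_const, Finset.sum_const]
    simp [hn2def, hn3def, mul_comm]
  have hdvd : (3:ℤ) ∣ (2 * (G.edgeFinset.card : ℤ) - (Fintype.card V : ℤ)) - ((n2 : ℤ) + 2 * n3) := by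
    have h2m : (2 * (G.edgeFinset.card : ℤ) - (Fintype.card V : ℤ)) =
        ∑ v, ((G.degree v : ℤ) - 1) := by
      rw [Finset.sum_sub_distrib, Finset.sum_const, Finset.card_univ]
      have h2 : (∑ v, (G.degree v : ℤ)) = 2 * (G.edgeFinset.card : ℤ) := by
        exact_mod_cast congrArg (Nat.cast : ℕ → ℤ) hhs
      rw [h2]; ring
    rw [h2m, hcount, ← Finset.sum_sub_distrib]
    apply Finset.dvd_sum
    intro v _
    obtain ⟨h1, h4⟩ := hdeg v
    set d := G.degree v with hd
    interval_cases d <;> norm_num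
  have hmod : (2 * (G.edgeFinset.card : ℤ) - (Fintype.card V : ℤ)) % 3
      = ((n2 : ℤ) + 2 * n3) % 3 := (Int.modEq_iff_dvd.mpr hdvd).symm
  have hgoal : (n2 : ℝ) * c1 + (n3 : ℝ) * c2 ≤
      (if (2 * (G.edgeFinset.card : ℤ) - (Fintype.card V : ℤ)) % 3 = 1 then c1
       else if (2 * (G.edgeFinset.card : ℤ) - (Fintype.card V : ℤ)) % 3 = 2 then c2
       else 0) := by
    have haux := stmt_15_aux c1 c2 n2 n3
      ((2 * (G.edgeFinset.card : ℤ) - (Fintype.card V : ℤ)) % 3) hc1 hc2 h21 h12 hmod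
    exact haux
  rw [hsum, hhsR]
  have heq : (a * (4*a^3 - 1) / 3) * (2 * (G.edgeFinset.card : ℝ))
      = (2 * a * (4*a^3 - 1) / 3) * (G.edgeFinset.card : ℝ) := by ring
  rw [heq]
  linarith [hgoal]
end

section
/- For every real number a > (ln 3 - ln 4)/(ln(ln 2) - ln(ln 3)) (≈ 0.6246), the quantities ξ_1 = (2/3)(3(ln 2)^a - 2(ln 4)^a) and ξ_2 = (1/3)(9(ln 3)^a - 8(ln 4)^a) satisfy ξ_1 < 0, ξ_2 < 0 and 2ξ_2 < ξ_1 < ξ_2/2. -/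
/-!
Write `P = (ln 2)^a`, `Q = (ln 3)^a`, `R = (ln 4)^a`. The four inequalities are linear in `P, Q, R`,
and the last one, `4P < 3Q`, is exactly the hypothesis on `a`. The other three follow from it
together with `Q³ ≤ R²P`, which is `((ln 3)³)^a ≤ (4 (ln 2)³)^a`: this holds for `a ≥ 0` because
`log₂ 3 < ∛4`, a numerically tight fact obtained from `3^29 < 2^46`.
-/

open Real

lemma log_three_pow_three_lt : log 3 ^ 3 < 4 * log 2 ^ 3 := by
  have h29 : 29 * log 3 < 46 * log 2 := by
    have h := log_lt_log (by positivity) (show (3 : ℝ) ^ 29 < 2 ^ 46 by norm_num)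
    rw [log_pow, log_pow] at h
    push_cast at h
    linarith
  have hL3 : 0 ≤ log 3 := log_nonneg (by norm_num)
  have hL2 : 0 < log 2 := log_pos (by norm_num)
  calc log 3 ^ 3 < (46 / 29 * log 2) ^ 3 := by gcongr; linarith
    _ = (46 / 29) ^ 3 * log 2 ^ 3 := by ring
    _ < 4 * log 2 ^ 3 := by gcongr; norm_num

section Homogeneous

variable {P Q R : ℝ}

lemma three_mul_lt_two_mul_of_pow_three_le (hP : 0 < P) (hR : 0 < R) (hPQ : 4 * P < 3 * Q)
    (h : Q ^ 3 ≤ R ^ 2 * P) : 3 * P < 2 * R := by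
  by_contra! hle
  have hR2 : R ^ 2 * P ≤ (3 * P / 2) ^ 2 * P := by gcongr; linarith
  have hQ3 : (4 * P / 3) ^ 3 < Q ^ 3 := by gcongr; linarith
  nlinarith [pow_pos hP 3]

lemma nine_mul_lt_eight_mul_of_pow_three_le (hP : 0 < P) (hR : 0 < R) (hPQ : 4 * P < 3 * Q)
    (h : Q ^ 3 ≤ R ^ 2 * P) : 9 * Q < 8 * R := by
  by_contra! hle
  have hQ : 0 < Q := by linarith
  have hR2 : (8 * R) ^ 2 * P ≤ (9 * Q) ^ 2 * P := by gcongr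
  nlinarith [mul_pos (pow_pos hQ 2) (show 0 < 64 * Q - 81 * P by linarith)]

/-- The defect `P (3Q - P)² - 4Q³ = -(Q - P)² (4Q - P)` is negative once `P < Q`. -/
lemma three_mul_lt_add_two_mul_of_pow_three_le (hP : 0 < P) (hR : 0 < R)
    (hPQ : 4 * P < 3 * Q) (h : Q ^ 3 ≤ R ^ 2 * P) : 3 * Q < P + 2 * R := by
  by_contra! hle
  have hR2 : 4 * (R ^ 2 * P) ≤ (3 * Q - P) ^ 2 * P := by
    have : (2 * R) ^ 2 ≤ (3 * Q - P) ^ 2 := by gcongr; linarith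
    nlinarith
  have hdefect : 0 < (Q - P) ^ 2 * (4 * Q - P) :=
    mul_pos (pow_pos (by linarith) 2) (by linarith)
  nlinarith

end Homogeneous

lemma four_mul_log_two_rpow_lt {a : ℝ}
    (ha : (log 3 - log 4) / (log (log 2) - log (log 3)) < a) :
    4 * log 2 ^ a < 3 * log 3 ^ a := by
  have hL2 : 0 < log 2 := log_pos (by norm_num)
  have hL3 : 0 < log 3 := log_pos (by norm_num)
  have hd : log (log 2) - log (log 3) < 0 :=
    sub_neg.2 (log_lt_log hL2 (log_lt_log (by norm_num) (by norm_num)))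
  rw [div_lt_iff_of_neg hd] at ha
  rw [← log_lt_log_iff (by positivity) (by positivity), log_mul (by norm_num) (by positivity),
    log_mul (by norm_num) (by positivity), log_rpow hL2, log_rpow hL3]
  linarith

lemma log_three_rpow_pow_three_le {a : ℝ} (ha : 0 ≤ a) :
    (log 3 ^ a) ^ 3 ≤ (log 4 ^ a) ^ 2 * log 2 ^ a := by
  have hL2 : 0 < log 2 := log_pos (by norm_num)
  have hL4 : log 4 = 2 * log 2 := by
    rw [show (4 : ℝ) = 2 ^ 2 by norm_num, log_pow]; push_cast; ring
  rw [rpow_pow_comm (log_nonneg (by norm_num)), rpow_pow_comm (log_nonneg (by norm_num)),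
    ← mul_rpow (by positivity) hL2.le, hL4]
  exact rpow_le_rpow (by positivity) (by nlinarith [log_three_pow_three_lt]) ha

theorem stmt_16 (a : ℝ)
    (ha : (Real.log 3 - Real.log 4) / (Real.log (Real.log 2) - Real.log (Real.log 3)) < a) :
    let ξ₁ : ℝ := 2 * (3 * (Real.log 2) ^ a - 2 * (Real.log 4) ^ a) / 3
    let ξ₂ : ℝ := (9 * (Real.log 3) ^ a - 8 * (Real.log 4) ^ a) / 3
    ξ₁ < 0 ∧ ξ₂ < 0 ∧ 2 * ξ₂ < ξ₁ ∧ ξ₁ < ξ₂ / 2 := by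
  intro ξ₁ ξ₂
  have ha₀ : 0 ≤ a := by
    refine le_of_lt (lt_trans (div_pos_of_neg_of_neg ?_ ?_) ha)
    · exact sub_neg.2 (log_lt_log (by norm_num) (by norm_num))
    · exact sub_neg.2 (log_lt_log (log_pos (by norm_num)) (log_lt_log (by norm_num) (by norm_num)))
  have hP : 0 < log 2 ^ a := rpow_pos_of_pos (log_pos (by norm_num)) a
  have hR : 0 < log 4 ^ a := rpow_pos_of_pos (log_pos (by norm_num)) a
  have hPQ := four_mul_log_two_rpow_lt ha
  have hcube := log_three_rpow_pow_three_le ha₀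
  have h₁ := three_mul_lt_two_mul_of_pow_three_le hP hR hPQ hcube
  have h₂ := nine_mul_lt_eight_mul_of_pow_three_le hP hR hPQ hcube
  have h₃ := three_mul_lt_add_two_mul_of_pow_three_le hP hR hPQ hcube
  refine ⟨?_, ?_, ?_, ?_⟩ <;> simp only [ξ₁, ξ₂] <;> linarith
end

section
/- Let G be a connected graph with n ≥ 5 vertices and m edges, all degrees in {1,2,3,4}, and let a > (ln 3 - ln 4)/(ln(ln 2) - ln(ln 3)). Then the variable sum lodeg index SLI_a(G) = ∑_v d_v·(ln d_v)^a satisfies SLI_a(G) ≤ (8(ln 4)^a/3)m - (4(ln 4)^a/3)n + c, where c = (2/3)(3(ln 2)^a - 2(ln 4)^a) if 2m-n ≡ 1 (mod 3), c = (1/3)(9(ln 3)^a - 8(ln 4)^a) if 2m-n ≡ 2 (mod 3), and c = 0 if 2m-n ≡ 0 (mod 3). -/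
open Finset

theorem stmt_17 (V : Type*) [Fintype V] [DecidableEq V] (G : SimpleGraph V)
    [DecidableRel G.Adj] (a : ℝ)
    (ha : (Real.log 3 - Real.log 4) / (Real.log (Real.log 2) - Real.log (Real.log 3)) < a)
    (hn : 5 ≤ Fintype.card V) (hconn : G.Connected)
    (hdeg : ∀ v : V, 1 ≤ G.degree v ∧ G.degree v ≤ 4) :
    ∑ v, (G.degree v : ℝ) * (Real.log (G.degree v)) ^ a ≤
      (8 * (Real.log 4) ^ a / 3) * (G.edgeFinset.card : ℝ)
      - (4 * (Real.log 4) ^ a / 3) * (Fintype.card V : ℝ)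
      + (if (2 * (G.edgeFinset.card : ℤ) - (Fintype.card V : ℤ)) % 3 = 1 then
           2 * (3 * (Real.log 2) ^ a - 2 * (Real.log 4) ^ a) / 3
         else if (2 * (G.edgeFinset.card : ℤ) - (Fintype.card V : ℤ)) % 3 = 2 then
           (9 * (Real.log 3) ^ a - 8 * (Real.log 4) ^ a) / 3
         else 0) := by
  classical
  -- Analytic facts
  have hl2 : 0 < Real.log 2 := Real.log_pos (by norm_num)
  have hl3 : 0 < Real.log 3 := Real.log_pos (by norm_num)
  have hl4 : 0 < Real.log 4 := Real.log_pos (by norm_num)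
  have hnum : Real.log 3 - Real.log 4 < 0 := by
    have := Real.log_lt_log (by norm_num : (0:ℝ) < 3) (by norm_num : (3:ℝ) < 4)
    linarith
  have hll2 : Real.log (Real.log 2) < 0 :=
    Real.log_neg hl2 (by
      have := Real.log_lt_log (by norm_num : (0:ℝ) < 2)
        (by nlinarith [Real.exp_one_gt_d9] : (2:ℝ) < Real.exp 1)
      simpa using this.trans_le (le_of_eq (Real.log_exp 1)))
  have hll3 : 0 < Real.log (Real.log 3) := by
    have h3 : Real.exp 1 < 3 := by nlinarith [Real.exp_one_lt_d9]
    have : 1 < Real.log 3 := by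
      calc (1:ℝ) = Real.log (Real.exp 1) := (Real.log_exp 1).symm
      _ < Real.log 3 := Real.log_lt_log (Real.exp_pos 1) h3
    exact Real.log_pos this
  have hden : Real.log (Real.log 2) - Real.log (Real.log 3) < 0 := by linarith
  have ha0 : 0 < a := lt_trans (div_pos_of_neg_of_neg hnum hden) ha
  have h1 : 4 * Real.log 2 ^ a < 3 * Real.log 3 ^ a := by
    have hprod : a * (Real.log (Real.log 2) - Real.log (Real.log 3)) < Real.log 3 - Real.log 4 :=
      (div_lt_iff_of_neg hden).mp ha
    have hlog : Real.log (4 * Real.log 2 ^ a) < Real.log (3 * Real.log 3 ^ a) := by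
      rw [Real.log_mul (by norm_num) (Real.rpow_pos_of_pos hl2 a).ne',
        Real.log_mul (by norm_num) (Real.rpow_pos_of_pos hl3 a).ne',
        Real.log_rpow hl2, Real.log_rpow hl3]
      linarith
    exact (Real.log_lt_log_iff (by positivity) (by positivity)).mp hlog
  have h2 : 3 * Real.log 3 ^ a ≤ Real.log 2 ^ a + 2 * Real.log 4 ^ a := by
    have h41 : 41 * Real.log 3 ≤ 65 * Real.log 2 := by
      have hp : (3:ℝ)^(41:ℕ) ≤ 2^(65:ℕ) := by norm_num
      have := Real.log_le_log (by positivity) hp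
      rw [Real.log_pow, Real.log_pow] at this
      push_cast at this
      linarith
    have hcube : Real.log 3 ^ (3:ℕ) ≤ Real.log 2 * Real.log 4 ^ (2:ℕ) := by
      have h4 : Real.log 4 = 2 * Real.log 2 := by
        rw [show (4:ℝ) = 2^(2:ℕ) by norm_num, Real.log_pow]; push_cast; ring
      have hc : (41 * Real.log 3)^(3:ℕ) ≤ (65 * Real.log 2)^(3:ℕ) :=
        pow_le_pow_left₀ (by positivity) h41 3
      rw [h4]
      nlinarith [pow_pos hl2 3, pow_pos hl3 3]
    have key : Real.log 3 ^ a ≤ Real.log 2 ^ (a/3) * Real.log 4 ^ (2*(a/3)) := by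
      have e1 : Real.log 3 ^ a = ((Real.log 3 ^ (3:ℕ) : ℝ)) ^ (a/3) := by
        rw [← Real.rpow_natCast (Real.log 3) 3, ← Real.rpow_mul hl3.le]
        congr 1
        push_cast
        ring
      rw [e1]
      calc ((Real.log 3 ^ (3:ℕ) : ℝ)) ^ (a/3)
          ≤ (Real.log 2 * Real.log 4 ^ (2:ℕ)) ^ (a/3) :=
            Real.rpow_le_rpow (by positivity) hcube (by positivity)
        _ = Real.log 2 ^ (a/3) * Real.log 4 ^ (2*(a/3)) := by
            rw [Real.mul_rpow hl2.le (by positivity), ← Real.rpow_natCast (Real.log 4) 2,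
              ← Real.rpow_mul hl4.le]
            norm_num
    have gm : Real.log 2 ^ (a/3) * Real.log 4 ^ (2*(a/3)) ≤
        (1/3) * Real.log 2 ^ a + (2/3) * Real.log 4 ^ a := by
      have := Real.geom_mean_le_arith_mean2_weighted (by norm_num : (0:ℝ) ≤ 1/3)
        (by norm_num : (0:ℝ) ≤ 2/3) (Real.rpow_nonneg hl2.le a) (Real.rpow_nonneg hl4.le a)
        (by norm_num : (1:ℝ)/3 + 2/3 = 1)
      rwa [← Real.rpow_mul hl2.le, ← Real.rpow_mul hl4.le,
        show a*(1/3) = a/3 by ring, show a*(2/3) = 2*(a/3) by ring] at this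
    linarith
  -- Combinatorial setup
  set L2 := Real.log 2 ^ a with hL2
  set L3 := Real.log 3 ^ a with hL3
  set L4 := Real.log 4 ^ a with hL4
  set n2 : ℕ := #(univ.filter (fun v => G.degree v = 2)) with hn2
  set n3 : ℕ := #(univ.filter (fun v => G.degree v = 3)) with hn3
  set n4 : ℕ := #(univ.filter (fun v => G.degree v = 4)) with hn4
  set m : ℕ := #G.edgeFinset with hm
  set n : ℕ := Fintype.card V with hnn
  have hds : ∑ v, G.degree v = 2 * m := G.sum_degrees_eq_twice_card_edges
  have hmodid : 2 * (m:ℤ) - n = n2 + 2*n3 + 3*n4 := by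
    have ha1 : ∑ v, ((G.degree v : ℤ) - 1) = 2 * (m:ℤ) - n := by
      rw [Finset.sum_sub_distrib, Finset.sum_const, Finset.card_univ]
      have : ∑ v, (G.degree v : ℤ) = ((∑ v, G.degree v : ℕ) : ℤ) := by push_cast; rfl
      rw [this, hds]
      push_cast
      ring
    have ha2 : ∑ v, ((G.degree v : ℤ) - 1)
        = ∑ v, ((if G.degree v = 2 then (1:ℤ) else 0)
          + (if G.degree v = 3 then (2:ℤ) else 0) + (if G.degree v = 4 then (3:ℤ) else 0)) := by
      refine Finset.sum_congr rfl fun v _ => ?_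
      obtain ⟨hv1, hv4⟩ := hdeg v
      interval_cases h : G.degree v <;> norm_num
    rw [ha2] at ha1
    rw [Finset.sum_add_distrib, Finset.sum_add_distrib, ← Finset.sum_filter, ← Finset.sum_filter,
      ← Finset.sum_filter, Finset.sum_const, Finset.sum_const, Finset.sum_const] at ha1
    simp only [nsmul_eq_mul, mul_one] at ha1
    rw [← ha1]
    push_cast
    ring
  have hsum : ∑ v, (G.degree v : ℝ) * (Real.log (G.degree v)) ^ a
      = (4/3)*L4 * (2*(m:ℝ) - n) + (2*L2 - (4/3)*L4) * n2 + (3*L3 - (8/3)*L4) * n3 := by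
    have hb2 : ∑ v, (G.degree v : ℝ) * (Real.log (G.degree v)) ^ a
        = ∑ v, ((4/3)*L4*((G.degree v : ℝ) - 1)
          + (if G.degree v = 2 then 2*L2 - (4/3)*L4 else 0)
          + (if G.degree v = 3 then 3*L3 - (8/3)*L4 else 0)) := by
      refine Finset.sum_congr rfl fun v _ => ?_
      obtain ⟨hv1, hv4⟩ := hdeg v
      interval_cases h : G.degree v
      · norm_num [Real.log_one, Real.zero_rpow ha0.ne']
      all_goals norm_num [hL2, hL3, hL4]
      all_goals try ring
    rw [hb2, Finset.sum_add_distrib, Finset.sum_add_distrib, ← Finset.sum_filter,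
      ← Finset.sum_filter, Finset.sum_const, Finset.sum_const, ← Finset.mul_sum]
    have hb3 : ∑ v, ((G.degree v : ℝ) - 1) = 2*(m:ℝ) - n := by
      rw [Finset.sum_sub_distrib, Finset.sum_const, Finset.card_univ]
      have : ∑ v, (G.degree v : ℝ) = ((∑ v, G.degree v : ℕ) : ℝ) := by push_cast; rfl
      rw [this, hds]
      push_cast
      ring
    rw [hb3]
    simp only [nsmul_eq_mul]
    ring
  -- bounds on the correction terms
  have hA : 2*L2 - (4/3)*L4 < 0 := by rw [hL2, hL3, hL4] at *; linarith
  have hB : 3*L3 - (8/3)*L4 < 0 := by rw [hL2, hL3, hL4] at *; linarith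
  rw [hsum]
  have hc2 : (0:ℝ) ≤ (n2:ℝ) := Nat.cast_nonneg n2
  have hc3 : (0:ℝ) ≤ (n3:ℝ) := Nat.cast_nonneg n3
  have hmain : (2*L2 - (4/3)*L4) * n2 + (3*L3 - (8/3)*L4) * n3 ≤
      (if (2 * (m:ℤ) - n) % 3 = 1 then 2 * (3 * L2 - 2 * L4) / 3
       else if (2 * (m:ℤ) - n) % 3 = 2 then (9 * L3 - 8 * L4) / 3 else 0) := by
    have ht2 : (2*L2 - (4/3)*L4) * n2 ≤ 0 := mul_nonpos_of_nonpos_of_nonneg hA.le hc2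
    have ht3 : (3*L3 - (8/3)*L4) * n3 ≤ 0 := mul_nonpos_of_nonpos_of_nonneg hB.le hc3
    split_ifs with hr1 hr2
    · rw [hmodid] at hr1
      have : 1 ≤ n2 ∨ 2 ≤ n3 := by omega
      rcases this with h | h
      · have hcast : (1:ℝ) ≤ (n2:ℝ) := by exact_mod_cast h
        have := mul_le_mul_of_nonpos_left hcast hA.le
        rw [hL2, hL3, hL4] at *
        linarith
      · have hcast : (2:ℝ) ≤ (n3:ℝ) := by exact_mod_cast h
        have := mul_le_mul_of_nonpos_left hcast hB.le
        rw [hL2, hL3, hL4] at *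
        linarith
    · rw [hmodid] at hr2
      have : 1 ≤ n3 ∨ 2 ≤ n2 := by omega
      rcases this with h | h
      · have hcast : (1:ℝ) ≤ (n3:ℝ) := by exact_mod_cast h
        have := mul_le_mul_of_nonpos_left hcast hB.le
        rw [hL2, hL3, hL4] at *
        linarith
      · have hcast : (2:ℝ) ≤ (n2:ℝ) := by exact_mod_cast h
        have := mul_le_mul_of_nonpos_left hcast hA.le
        rw [hL2, hL3, hL4] at *
        linarith
    · linarith
  linarith [hmain]
end

section
/- Let G be a connected graph with n ≥ 11 vertices and m edges, all degrees in {1,2,3,4}. Then the forgotten topological coindex F̄(G) = ∑_v (n-1-d_v)·d_v^2 satisfies: F̄(G) ≤ 2(m(5n-26) - n(2n-11) + 8) if 2m-n ≡ 1 (mod 3); F̄(G) ≤ 2(m(5n-26) - n(2n-11) + 9) if 2m-n ≡ 2 (mod 3); and F̄(G) ≤ 2(m(5n-26) - 2n(n-6)) if 2m-n ≡ 0 (mod 3). -/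
open Finset

theorem stmt_19 (V : Type*) [Fintype V] [DecidableEq V] (G : SimpleGraph V)
    [DecidableRel G.Adj]
    (hn : 11 ≤ Fintype.card V) (hconn : G.Connected)
    (hdeg : ∀ v : V, 1 ≤ G.degree v ∧ G.degree v ≤ 4) :
    (((2 * (G.edgeFinset.card : ℤ) - (Fintype.card V : ℤ)) % 3 = 1 →
       ∑ v, ((Fintype.card V : ℝ) - 1 - G.degree v) * (G.degree v : ℝ) ^ 2 ≤
         2 * ((G.edgeFinset.card : ℝ) * (5 * (Fintype.card V : ℝ) - 26)
              - (Fintype.card V : ℝ) * (2 * (Fintype.card V : ℝ) - 11) + 8))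
     ∧ ((2 * (G.edgeFinset.card : ℤ) - (Fintype.card V : ℤ)) % 3 = 2 →
       ∑ v, ((Fintype.card V : ℝ) - 1 - G.degree v) * (G.degree v : ℝ) ^ 2 ≤
         2 * ((G.edgeFinset.card : ℝ) * (5 * (Fintype.card V : ℝ) - 26)
              - (Fintype.card V : ℝ) * (2 * (Fintype.card V : ℝ) - 11) + 9))
     ∧ ((2 * (G.edgeFinset.card : ℤ) - (Fintype.card V : ℤ)) % 3 = 0 →
       ∑ v, ((Fintype.card V : ℝ) - 1 - G.degree v) * (G.degree v : ℝ) ^ 2 ≤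
         2 * ((G.edgeFinset.card : ℝ) * (5 * (Fintype.card V : ℝ) - 26)
              - 2 * (Fintype.card V : ℝ) * ((Fintype.card V : ℝ) - 6)))) := by
  classical
  set n := Fintype.card V with hn'
  set m := G.edgeFinset.card with hm'
  set c2 := (Finset.univ.filter (fun v => G.degree v = 2)).card with hc2
  set c3 := (Finset.univ.filter (fun v => G.degree v = 3)).card with hc3
  set c4 := (Finset.univ.filter (fun v => G.degree v = 4)).card with hc4
  have hsum : ∑ v : V, G.degree v = 2 * m := G.sum_degrees_eq_twice_card_edges
  have hn11 : (11 : ℝ) ≤ (n : ℝ) := by exact_mod_cast hn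
  -- pointwise identity over ℝ
  have hpt : ∀ v : V, ((n : ℝ) - 1 - G.degree v) * (G.degree v : ℝ) ^ 2
      = (5 * (n : ℝ) - 26) * (G.degree v : ℝ) + (24 - 4 * (n : ℝ))
        - (if G.degree v = 2 then (2 * (n : ℝ) - 16) else 0)
        - (if G.degree v = 3 then (2 * (n : ℝ) - 18) else 0) := by
    intro v
    obtain ⟨h1, h4⟩ := hdeg v
    interval_cases (G.degree v) <;> norm_num <;> ring
  have hdsum : ∑ v : V, (G.degree v : ℝ) = 2 * (m : ℝ) := by
    exact_mod_cast congrArg (Nat.cast : ℕ → ℝ) hsum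
  have hs2 : ∑ v : V, (if G.degree v = 2 then (2 * (n : ℝ) - 16) else 0)
      = (c2 : ℝ) * (2 * (n : ℝ) - 16) := by
    rw [← Finset.sum_filter, Finset.sum_const, nsmul_eq_mul]
  have hs3 : ∑ v : V, (if G.degree v = 3 then (2 * (n : ℝ) - 18) else 0)
      = (c3 : ℝ) * (2 * (n : ℝ) - 18) := by
    rw [← Finset.sum_filter, Finset.sum_const, nsmul_eq_mul]
  have key : ∑ v : V, ((n : ℝ) - 1 - G.degree v) * (G.degree v : ℝ) ^ 2
      = (5 * (n : ℝ) - 26) * (2 * (m : ℝ)) + (n : ℝ) * (24 - 4 * (n : ℝ))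
        - (c2 : ℝ) * (2 * (n : ℝ) - 16) - (c3 : ℝ) * (2 * (n : ℝ) - 18) := by
    rw [Finset.sum_congr rfl (fun v _ => hpt v)]
    rw [Finset.sum_sub_distrib, Finset.sum_sub_distrib, Finset.sum_add_distrib,
      ← Finset.mul_sum, hdsum, hs2, hs3, Finset.sum_const, Finset.card_univ,
      nsmul_eq_mul]
  -- congruence identity over ℤ
  have hpt2 : ∀ v : V, ((G.degree v : ℤ) - 1)
      = (if G.degree v = 2 then (1 : ℤ) else 0)
        + 2 * (if G.degree v = 3 then (1 : ℤ) else 0)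
        + 3 * (if G.degree v = 4 then (1 : ℤ) else 0) := by
    intro v
    obtain ⟨h1, h4⟩ := hdeg v
    interval_cases (G.degree v) <;> norm_num
  have hmods : 2 * (m : ℤ) - (n : ℤ) = (c2 : ℤ) + 2 * c3 + 3 * c4 := by
    have h1 : ∑ v : V, ((G.degree v : ℤ) - 1) = (c2 : ℤ) + 2 * c3 + 3 * c4 := by
      rw [Finset.sum_congr rfl (fun v _ => hpt2 v)]
      rw [Finset.sum_add_distrib, Finset.sum_add_distrib, ← Finset.mul_sum,
        ← Finset.mul_sum, ← Finset.sum_filter, ← Finset.sum_filter,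
        ← Finset.sum_filter, Finset.sum_const, Finset.sum_const, Finset.sum_const]
      push_cast
      ring
    have h2 : ∑ v : V, ((G.degree v : ℤ) - 1) = 2 * (m : ℤ) - (n : ℤ) := by
      rw [Finset.sum_sub_distrib, Finset.sum_const, Finset.card_univ]
      have : ∑ v : V, (G.degree v : ℤ) = 2 * (m : ℤ) := by
        exact_mod_cast congrArg (Nat.cast : ℕ → ℤ) hsum
      rw [this]
      push_cast
      ring
    linarith
  have hc2nn : (0 : ℝ) ≤ (c2 : ℝ) := Nat.cast_nonneg _
  have hc3nn : (0 : ℝ) ≤ (c3 : ℝ) := Nat.cast_nonneg _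
  refine ⟨?_, ?_, ?_⟩
  · intro h
    rw [key]
    have hcases : 1 ≤ c2 ∨ 2 ≤ c3 := by
      rw [hmods] at h
      omega
    rcases hcases with hc | hc
    · have : (1 : ℝ) ≤ (c2 : ℝ) := by exact_mod_cast hc
      nlinarith [mul_nonneg hc3nn (by linarith : (0 : ℝ) ≤ 2 * (n : ℝ) - 18)]
    · have : (2 : ℝ) ≤ (c3 : ℝ) := by exact_mod_cast hc
      nlinarith [mul_nonneg hc2nn (by linarith : (0 : ℝ) ≤ 2 * (n : ℝ) - 16)]
  · intro h
    rw [key]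
    have hcases : 1 ≤ c3 ∨ 2 ≤ c2 := by
      rw [hmods] at h
      omega
    rcases hcases with hc | hc
    · have : (1 : ℝ) ≤ (c3 : ℝ) := by exact_mod_cast hc
      nlinarith [mul_nonneg hc2nn (by linarith : (0 : ℝ) ≤ 2 * (n : ℝ) - 16)]
    · have : (2 : ℝ) ≤ (c2 : ℝ) := by exact_mod_cast hc
      nlinarith [mul_nonneg hc3nn (by linarith : (0 : ℝ) ≤ 2 * (n : ℝ) - 18)]
  · intro h
    rw [key]
    nlinarith [mul_nonneg hc2nn (by linarith : (0 : ℝ) ≤ 2 * (n : ℝ) - 16),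
      mul_nonneg hc3nn (by linarith : (0 : ℝ) ≤ 2 * (n : ℝ) - 18)]
end
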